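/- Let $\Field$ be a field and $R$ a commutative ring. The Steinberg module $\St_{\GL_n}(\Field;R) = \widetilde H_{n-2}(\Tits_{\GL_n}(\Field);R)$ is a free $R$-module with basis the apartment classes $[\![B]\!]$ as $B$ ranges over upper unitriangular matrices in $\GL_n(\Field)$. -/

import Mathlib

open scoped Classical

section
variable (F : Type*) [Field F] (R : Type*) [CommRing R]

/-- A chain of `k` nonzero proper subspaces of `F^d`:
`0 ⊊ V₀ ⊊ ⋯ ⊊ V_{k-1} ⊊ F^d`.  These are the `(k-1)`-simplices of the Tits
building of `GL_d(F)` (with `k = 0` giving the empty simplex of the augmented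
complex). -/
def TFlag (d k : ℕ) : Type _ :=
  {V : Fin k → Submodule F (Fin d → F) // StrictMono V ∧ ∀ i, V i ≠ ⊥ ∧ V i ≠ ⊤}

/-- The module of simplicial `(k-1)`-chains (with `R` coefficients) of the Tits
building of `GL_d(F)`, in its augmented (reduced) version. -/
def TCh (d k : ℕ) := TFlag F d k →₀ R

noncomputable instance (d k : ℕ) : AddCommGroup (TCh F R d k) :=
  inferInstanceAs (AddCommGroup (TFlag F d k →₀ R))
noncomputable instance (d k : ℕ) : Module R (TCh F R d k) :=
  inferInstanceAs (Module R (TFlag F d k →₀ R))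

/-- The `i`-th face of a flag: delete the `i`-th subspace. -/
def tface {d k : ℕ} (V : TFlag F d (k + 1)) (i : Fin (k + 1)) : TFlag F d k :=
  ⟨V.1 ∘ i.succAbove, V.2.1.comp (Fin.strictMono_succAbove i), fun j => V.2.2 _⟩

/-- The simplicial boundary map of the (augmented) Tits building. -/
noncomputable def tbdry (d k : ℕ) : TCh F R d (k + 1) →ₗ[R] TCh F R d k :=
  Finsupp.lsum R fun V =>
    ∑ i : Fin (k + 1), ((-1 : R) ^ (i : ℕ)) • Finsupp.lsingle (tface F V i)

/-- The basis chain associated to a sequence of subspaces: the corresponding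
generator if the sequence is a valid flag, and `0` otherwise (as for a simplicial
map collapsing a degenerate simplex). -/
noncomputable def tchainOf {d k : ℕ} (V : Fin k → Submodule F (Fin d → F)) :
    TCh F R d k :=
  if h : StrictMono V ∧ ∀ i, V i ≠ ⊥ ∧ V i ≠ ⊤ then Finsupp.single ⟨V, h⟩ 1 else 0

/-- The apartment class of a `d × d` matrix `B` over `F` (with nonzero columns):
the pushforward of the fundamental class of the barycentric subdivision of the
boundary of a `(d-1)`-simplex, i.e. the signed sum over all permutations `π` of the
flags `⟨v_{π(0)}⟩ ⊊ ⟨v_{π(0)}, v_{π(1)}⟩ ⊊ ⋯`, where `v_j` are the columns of `B`. -/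
noncomputable def apartment (d : ℕ) (B : Matrix (Fin d) (Fin d) F) :
    TCh F R d (d - 1) :=
  ∑ π : Equiv.Perm (Fin d), ((Equiv.Perm.sign π : ℤ)) •
    tchainOf F R (fun k : Fin (d - 1) =>
      Submodule.span F ((fun i : Fin d => fun r => B r (π i)) '' {i | (i : ℕ) ≤ (k : ℕ)}))

/-- The chain map on the Tits building induced by a matrix `g` acting on `F^d`. -/
noncomputable def tmap {d k : ℕ} (g : Matrix (Fin d) (Fin d) F) :
    TCh F R d k →ₗ[R] TCh F R d k :=
  Finsupp.lsum R fun V => LinearMap.toSpanSingleton R _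
    (tchainOf F R (fun i => Submodule.map (Matrix.mulVecLin g) (V.1 i)))

end

/-!
A chamber is generic when it is opposite to the standard flag `E_1 ⊂ ⋯ ⊂ E_{m+1}`, where
`E_s = coordSubspace F (m + 2) s` is spanned by the first `s` standard basis vectors: its `t`-th
member is a complement of `E_{m+1-t}`. Generic chambers correspond bijectively to upper
unitriangular matrices `B`, via the flag `revFrameFlag B` spanned by the columns of `B` taken from
the last one backwards, and this is the only generic chamber in the apartment of `B`. So the
apartment classes are linearly independent, and a cycle `z` minus `∑ ± z (revFrameFlag B) • [[B]]`
is a cycle vanishing on every generic chamber.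

Such a cycle `z` is zero. Otherwise pick a non-generic chamber `C` with `z C ≠ 0` of least weight:
with `k` the last index where `C k` meets `E_{m+1-k}`, this intersection is a line `X`, and `j` is
the first index with `X ≤ C j`. Every other chamber through the face of `C` without its `j`-th
member has either a smaller `k` (if `j = k`) or the same `X` entering later (if `j < k`), so it has
smaller weight; hence the boundary of `z` has coefficient `± z C ≠ 0` on that face.
-/

namespace SolomonTits

open Module Submodule

variable {F : Type*} [Field F]

section Chambers

variable {m : ℕ}

theorem finrank_flag_apply (C : TFlag F (m + 1) m) (t : Fin m) :
    finrank F (C.1 t) = t + 1 := by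
  have hpos : ∀ t, 1 ≤ finrank F (C.1 t) := fun t => one_le_finrank_iff.mpr (C.2.2 t).1
  have hlt : ∀ t, finrank F (C.1 t) < m + 1 := fun t => by
    simpa using finrank_lt (C.2.2 t).2
  let g : Fin m → Fin m := fun t => ⟨finrank F (C.1 t) - 1, by have := hpos t; have := hlt t; omega⟩
  have hg : StrictMono g := fun s t hst => by
    have := finrank_lt_finrank_of_lt (C.2.1 hst)
    have := hpos s
    simp only [g, Fin.mk_lt_mk]
    omega
  have h : finrank F (C.1 t) - 1 = t := congrArg Fin.val (congrFun hg.eq_id t)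
  have := hpos t
  omega

theorem flag_eq_of_le {C C' : TFlag F (m + 1) m} (h : ∀ t, C.1 t ≤ C'.1 t) : C = C' :=
  Subtype.ext <| funext fun t =>
    eq_of_le_of_finrank_le (h t) (by rw [finrank_flag_apply, finrank_flag_apply])

theorem flag_apply_le_of_minimal {C : TFlag F (m + 1) m} {X U : Submodule F (Fin (m + 1) → F)}
    {j : Fin m} (hX : X ≠ ⊥) (hXj : X ≤ C.1 j) (hmin : ∀ i < j, ¬ X ≤ C.1 i) (hXU : X ≤ U)
    (hU : ∀ i < j, C.1 i ≤ U) : C.1 j ≤ U := by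
  obtain ⟨_ | i, hj⟩ := j
  · have : X = C.1 ⟨0, hj⟩ := eq_of_le_of_finrank_le hXj <| by
      rw [finrank_flag_apply]
      exact one_le_finrank_iff.mpr hX
    exact this ▸ hXU
  · have hi : (⟨i, by omega⟩ : Fin m) < ⟨i + 1, hj⟩ := Fin.mk_lt_mk.mpr i.lt_succ_self
    have hlt : C.1 ⟨i, _⟩ < C.1 ⟨i, _⟩ ⊔ X := left_lt_sup.mpr (hmin _ hi)
    have heq : C.1 ⟨i, _⟩ ⊔ X = C.1 ⟨i + 1, hj⟩ :=
      eq_of_le_of_finrank_le (sup_le (C.2.1 hi).le hXj) <| by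
        have := finrank_lt_finrank_of_lt hlt
        rw [finrank_flag_apply] at this ⊢
        simpa using this
    exact heq ▸ sup_le (hU _ hi) hXU

theorem eq_of_tface_eq {C C' : TFlag F (m + 2) (m + 1)} {i j : Fin (m + 1)}
    (h : tface F C' i = tface F C j) : i = j ∧ ∀ t, t ≠ j → C'.1 t = C.1 t := by
  have h1 : ∀ t, C'.1 (i.succAbove t) = C.1 (j.succAbove t) := fun t =>
    congrFun (congrArg Subtype.val h) t
  obtain rfl : i = j := Fin.succAbove_left_injective <| funext fun t => Fin.ext <| by
    have := finrank_flag_apply C' (i.succAbove t)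
    rw [h1, finrank_flag_apply] at this
    omega
  refine ⟨rfl, fun t ht => ?_⟩
  obtain ⟨s, rfl⟩ := Fin.exists_succAbove_eq ht
  exact h1 s

end Chambers

section Coordinates

variable (F) in
def coordSubspace (d s : ℕ) : Submodule F (Fin d → F) :=
  ⨅ i ∈ {i : Fin d | s ≤ (i : ℕ)}, LinearMap.ker (LinearMap.proj i : (Fin d → F) →ₗ[F] F)

variable {d s : ℕ}

theorem mem_coordSubspace {x : Fin d → F} :
    x ∈ coordSubspace F d s ↔ ∀ i : Fin d, s ≤ (i : ℕ) → x i = 0 := by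
  simp [coordSubspace, mem_iInf]

theorem coordSubspace_zero : coordSubspace F d 0 = ⊥ :=
  eq_bot_iff.mpr fun _ hx => funext fun i => mem_coordSubspace.mp hx i (Nat.zero_le _)

theorem coordSubspace_mono {s s' : ℕ} (h : s ≤ s') : coordSubspace F d s ≤ coordSubspace F d s' :=
  fun _ hx => mem_coordSubspace.mpr fun i hi => mem_coordSubspace.mp hx i (h.trans hi)

theorem finrank_coordSubspace (hs : s ≤ d) : finrank F (coordSubspace F d s) = s := by
  have e := LinearMap.iInfKerProjEquiv F (fun _ : Fin d => F) (I := {i | (i : ℕ) < s})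
    (J := {i | s ≤ (i : ℕ)})
    (Set.disjoint_left.mpr fun i (h : (i : ℕ) < s) (h' : s ≤ (i : ℕ)) => by omega)
    (fun i _ => by simp only [Set.mem_union, Set.mem_ofPred_eq]; omega)
  rw [coordSubspace, e.finrank_eq, finrank_pi]
  exact Fintype.card_fin_lt_of_le hs

theorem finrank_le_one_of_disjoint_coordSubspace {A : Submodule F (Fin d → F)} (hs : s < d)
    (hA : A ≤ coordSubspace F d (s + 1)) (hdisj : Disjoint A (coordSubspace F d s)) :
    finrank F A ≤ 1 := by
  have h := finrank_sup_add_finrank_inf_eq A (coordSubspace F d s)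
  have hsup := finrank_mono (sup_le hA (coordSubspace_mono s.le_succ))
  rw [hdisj.eq_bot, finrank_bot, finrank_coordSubspace hs.le] at h
  rw [finrank_coordSubspace hs] at hsup
  omega

end Coordinates

section Descent

variable {m : ℕ}

def IsGeneric (C : TFlag F (m + 2) (m + 1)) : Prop :=
  ∀ t : Fin (m + 1), Disjoint (C.1 t) (coordSubspace F (m + 2) (m + 1 - t))

theorem IsGeneric.isCompl {C : TFlag F (m + 2) (m + 1)} (hC : IsGeneric C) (t : Fin (m + 1)) :
    IsCompl (C.1 t) (coordSubspace F (m + 2) (m + 1 - t)) := by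
  refine (isCompl_iff_disjoint _ _ ?_).mpr (hC t)
  rw [finrank_flag_apply, finrank_coordSubspace (by omega), finrank_fin_fun]
  omega

noncomputable def defects (C : TFlag F (m + 2) (m + 1)) : Finset (Fin (m + 1)) :=
  {t | ¬ Disjoint (C.1 t) (coordSubspace F (m + 2) (m + 1 - t))}

noncomputable def topDefect (C : TFlag F (m + 2) (m + 1)) : Fin (m + 1) :=
  if h : (defects C).Nonempty then (defects C).max' h else 0

noncomputable def defectSpace (C : TFlag F (m + 2) (m + 1)) : Submodule F (Fin (m + 2) → F) :=
  C.1 (topDefect C) ⊓ coordSubspace F (m + 2) (m + 1 - topDefect C)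

noncomputable def defectEntry (C : TFlag F (m + 2) (m + 1)) : Fin (m + 1) :=
  ({i | defectSpace C ≤ C.1 i} : Finset _).min'
    ⟨topDefect C, Finset.mem_filter.mpr ⟨Finset.mem_univ _, inf_le_left⟩⟩

noncomputable def weight (C : TFlag F (m + 2) (m + 1)) : Fin (m + 1) ×ₗ (Fin (m + 1))ᵒᵈ :=
  toLex (topDefect C, OrderDual.toDual (defectEntry C))

variable {C C' : TFlag F (m + 2) (m + 1)}

theorem mem_defects {t : Fin (m + 1)} :
    t ∈ defects C ↔ ¬ Disjoint (C.1 t) (coordSubspace F (m + 2) (m + 1 - t)) := by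
  simp [defects]

theorem nonempty_defects (hC : ¬ IsGeneric C) : (defects C).Nonempty := by
  simp only [IsGeneric, not_forall] at hC
  obtain ⟨t, ht⟩ := hC
  exact ⟨t, mem_defects.mpr ht⟩

theorem topDefect_mem_defects (hC : ¬ IsGeneric C) : topDefect C ∈ defects C := by
  rw [topDefect, dif_pos (nonempty_defects hC)]
  exact Finset.max'_mem _ _

theorem disjoint_of_topDefect_lt (hC : ¬ IsGeneric C) {t : Fin (m + 1)} (ht : topDefect C < t) :
    Disjoint (C.1 t) (coordSubspace F (m + 2) (m + 1 - t)) := by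
  by_contra h
  rw [topDefect, dif_pos (nonempty_defects hC)] at ht
  exact ht.not_ge (Finset.le_max' _ _ (mem_defects.mpr h))

theorem defectSpace_ne_bot (hC : ¬ IsGeneric C) : defectSpace C ≠ ⊥ :=
  fun h => mem_defects.mp (topDefect_mem_defects hC) (disjoint_iff.mpr h)

theorem defectSpace_le_defectEntry : defectSpace C ≤ C.1 (defectEntry C) :=
  (Finset.mem_filter.mp (Finset.min'_mem ({i | defectSpace C ≤ C.1 i} : Finset _) _)).2

theorem defectEntry_le {i : Fin (m + 1)} (h : defectSpace C ≤ C.1 i) : defectEntry C ≤ i :=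
  Finset.min'_le _ _ (by simpa using h)

theorem defectEntry_le_topDefect : defectEntry C ≤ topDefect C :=
  defectEntry_le inf_le_left

theorem not_defectSpace_le (hC : ¬ IsGeneric C) (hoff : ∀ t ≠ defectEntry C, C'.1 t = C.1 t)
    (hne : C' ≠ C) : ¬ defectSpace C ≤ C'.1 (defectEntry C) := by
  intro hle
  refine hne (flag_eq_of_le fun t => ?_).symm
  rcases eq_or_ne t (defectEntry C) with rfl | ht
  · refine flag_apply_le_of_minimal (defectSpace_ne_bot hC) defectSpace_le_defectEntry
      (fun i hi h => (defectEntry_le h).not_gt hi) hle fun i hi => ?_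
    rw [← hoff i hi.ne]
    exact C'.2.1.monotone hi.le
  · exact (hoff t ht).ge

/-- With `k = topDefect C`, the space `C (k + 1) ⊓ E_{m+1-k}` is at most a line (it meets
`E_{m-k}` trivially), so it is `defectSpace C`. -/
theorem disjoint_of_not_defectSpace_le (hC : ¬ IsGeneric C) {W : Submodule F (Fin (m + 2) → F)}
    (hW : ∀ t, topDefect C < t → W ≤ C.1 t) (hX : ¬ defectSpace C ≤ W) :
    Disjoint W (coordSubspace F (m + 2) (m + 1 - topDefect C)) := by
  set k := topDefect C
  set T := (W ⊔ C.1 k) ⊓ coordSubspace F (m + 2) (m + 1 - k)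
  have hT : finrank F T ≤ 1 := by
    refine finrank_le_one_of_disjoint_coordSubspace (s := m - k) (by omega)
      (by rw [show m - k + 1 = m + 1 - k by omega]; exact inf_le_right) ?_
    by_cases hk : (k : ℕ) < m
    · have hlt : k < ⟨k + 1, by omega⟩ := Fin.lt_def.mpr (Nat.lt_succ_self _)
      have hdisj := disjoint_of_topDefect_lt hC hlt
      simp only [Nat.add_sub_add_right] at hdisj
      exact hdisj.mono_left (inf_le_left.trans (sup_le (hW _ hlt) (C.2.1 hlt).le))
    · rw [show m - k = 0 by omega, coordSubspace_zero]
      exact disjoint_bot_right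
  have hXT : defectSpace C ≤ T := inf_le_inf_right _ le_sup_right
  rw [disjoint_iff]
  by_contra hWE
  have : W ⊓ coordSubspace F (m + 2) (m + 1 - k) = T :=
    eq_of_le_of_finrank_le (inf_le_inf_right _ le_sup_left)
      (hT.trans (one_le_finrank_iff.mpr hWE))
  exact hX (hXT.trans (this.ge.trans inf_le_left))

theorem weight_lt_of_eq_off_defectEntry (hC : ¬ IsGeneric C) (hC' : ¬ IsGeneric C')
    (hoff : ∀ t ≠ defectEntry C, C'.1 t = C.1 t) (hne : C' ≠ C) : weight C' < weight C := by
  have hX := not_defectSpace_le hC hoff hne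
  have habove : ∀ t, topDefect C < t → C'.1 t = C.1 t := fun t ht =>
    hoff t (defectEntry_le_topDefect.trans_lt ht).ne'
  have hC'above : ∀ t, topDefect C < t → t ∉ defects C' := fun t ht h =>
    mem_defects.mp h (habove t ht ▸ disjoint_of_topDefect_lt hC ht)
  rw [weight, weight, Prod.Lex.toLex_lt_toLex]
  rcases (defectEntry_le_topDefect (C := C)).lt_or_eq with hjk | hjk
  · right
    have hCk : C'.1 (topDefect C) = C.1 (topDefect C) := hoff _ hjk.ne'
    have hk : topDefect C' = topDefect C := by
      refine le_antisymm (not_lt.mp fun h => hC'above _ h (topDefect_mem_defects hC')) ?_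
      refine not_lt.mp fun h => mem_defects.mp (topDefect_mem_defects hC) ?_
      exact hCk ▸ disjoint_of_topDefect_lt hC' h
    have hX' : defectSpace C' = defectSpace C := by rw [defectSpace, defectSpace, hk, hCk]
    refine ⟨hk, OrderDual.toDual_lt_toDual.mpr (not_le.mp fun h => ?_)⟩
    have hXj' := hX' ▸ defectSpace_le_defectEntry (C := C')
    rcases h.lt_or_eq with h | h
    · exact h.not_ge (defectEntry_le (hoff _ h.ne ▸ hXj'))
    · exact hX (h ▸ hXj')
  · left
    change topDefect C' < topDefect C
    refine not_le.mp fun h => ?_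
    rcases h.lt_or_eq with h | h
    · exact hC'above _ h (topDefect_mem_defects hC')
    · refine mem_defects.mp (h ▸ topDefect_mem_defects hC') ?_
      refine disjoint_of_not_defectSpace_le hC (fun t ht => ?_) (hjk ▸ hX)
      rw [← habove t ht]
      exact C'.2.1.monotone ht.le

end Descent

section Chains

variable (R : Type*) [CommRing R] {d k : ℕ}

noncomputable def chainCoeff (C : TFlag F d k) : TCh F R d k →ₗ[R] R :=
  Finsupp.lapply C

variable {R}

theorem chain_ext {z w : TCh F R d k} (h : ∀ C, chainCoeff R C z = chainCoeff R C w) : z = w :=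
  Finsupp.ext h

theorem tchainOf_eq (C : TFlag F d k) : tchainOf F R C.1 = Finsupp.single C 1 :=
  dif_pos C.2

theorem chainCoeff_tchainOf (C C' : TFlag F d k) :
    chainCoeff R C' (tchainOf F R C.1) = if C = C' then 1 else 0 := by
  rw [tchainOf_eq]
  exact Finsupp.single_apply

theorem tbdry_tchainOf (C : TFlag F d (k + 1)) :
    tbdry F R d k (tchainOf F R C.1) =
      ∑ i : Fin (k + 1), (-1 : R) ^ (i : ℕ) • tchainOf F R (tface F C i).1 := by
  simp only [tchainOf_eq]
  exact (Finsupp.lsum_single _ _ _ _).trans (by simp only [LinearMap.sum_apply]; rfl)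

theorem chainCoeff_tbdry (z : TCh F R d (k + 1)) (G : TFlag F d k) :
    chainCoeff R G (tbdry F R d k z) = ∑ V ∈ Finsupp.support z, ∑ i,
      if tface F V i = G then (-1) ^ (i : ℕ) * chainCoeff R V z else 0 := by
  change Finsupp.lapply G (Finsupp.lsum R (fun V : TFlag F d (k + 1) => ∑ i : Fin (k + 1),
    ((-1 : R) ^ (i : ℕ)) • Finsupp.lsingle (R := R) (M := R) (tface F V i)) z) = _
  simp +contextual only [Finsupp.coe_lsum, Finsupp.sum, LinearMap.coe_sum, LinearMap.coe_smul,
    Finset.sum_apply, Pi.smul_apply, Finsupp.lsingle_apply, Finsupp.smul_single, smul_eq_mul,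
    Finsupp.single_mul, map_sum, Finsupp.lapply_apply, Finsupp.mul_apply, Finsupp.single_apply,
    mul_ite, ↓reduceIte, mul_zero]
  rfl

theorem chainCoeff_tbdry_tface {z : TCh F R d (k + 1)} {C : TFlag F d (k + 1)} {j : Fin (k + 1)}
    (huniq : ∀ V i, chainCoeff R V z ≠ 0 → tface F V i = tface F C j → V = C ∧ i = j) :
    chainCoeff R (tface F C j) (tbdry F R d k z) = (-1) ^ (j : ℕ) * chainCoeff R C z := by
  rw [chainCoeff_tbdry]
  calc _ = ∑ V ∈ Finsupp.support z, ∑ i,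
        if i = j ∧ V = C then (-1) ^ (i : ℕ) * chainCoeff R V z else 0 :=
        Finset.sum_congr rfl fun V hV => Finset.sum_congr rfl fun i _ => if_congr
          ⟨fun h => (huniq V i (Finsupp.mem_support_iff.mp hV) h).symm, by rintro ⟨rfl, rfl⟩; rfl⟩
          rfl rfl
    _ = (-1) ^ (j : ℕ) * chainCoeff R C z := by
      simp only [ite_and, Finset.sum_ite_eq', Finset.mem_univ, if_true]
      split_ifs with h
      · rfl
      · rw [show chainCoeff R C z = 0 from Finsupp.notMem_support_iff.mp h, mul_zero]

theorem eq_zero_of_tbdry_eq_zero {m : ℕ} {z : TCh F R (m + 2) (m + 1)}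
    (hz : tbdry F R (m + 2) m z = 0) (hgen : ∀ C, IsGeneric C → chainCoeff R C z = 0) :
    z = 0 := by
  by_contra hne
  obtain ⟨C, hCz, hmin⟩ := (InvImage.wf weight wellFounded_lt).has_min
    {C | chainCoeff R C z ≠ 0} (not_forall.mp fun h => hne (chain_ext fun C => by simpa using h C))
  have hgen' : ∀ V, chainCoeff R V z ≠ 0 → ¬ IsGeneric V := fun V hV h => hV (hgen V h)
  have hcoef := chainCoeff_tbdry_tface (z := z) (C := C) (j := defectEntry C) fun V i hV h => by
    obtain ⟨rfl, hoff⟩ := eq_of_tface_eq h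
    refine ⟨not_not.mp fun hVC => hmin V hV ?_, rfl⟩
    exact weight_lt_of_eq_off_defectEntry (hgen' C hCz) (hgen' V hV) hoff hVC
  rw [hz, map_zero, eq_comm, neg_one_pow_mul_eq_zero_iff] at hcoef
  exact hCz hcoef

end Chains

section Frames

theorem _root_.LinearIndependent.apply_mem_span_image_iff {K ι M : Type*} [Ring K] [Nontrivial K]
    [AddCommGroup M] [Module K M] {v : ι → M} (hv : LinearIndependent K v) {s : Set ι} {i : ι} :
    v i ∈ span K (v '' s) ↔ i ∈ s :=
  ⟨fun h => not_not.mp fun hi => hv.notMem_span_image hi h,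
    fun h => subset_span (Set.mem_image_of_mem v h)⟩

variable {m : ℕ} {v : Fin (m + 2) → Fin (m + 2) → F}

theorem frame_isFlag (hv : LinearIndependent F v) :
    StrictMono (fun k : Fin (m + 1) => span F (v '' {i | (i : ℕ) ≤ k})) ∧
      ∀ k : Fin (m + 1), span F (v '' {i | (i : ℕ) ≤ k}) ≠ ⊥ ∧
        span F (v '' {i | (i : ℕ) ≤ k}) ≠ ⊤ := by
  have hmem : ∀ i (k : Fin (m + 1)), v i ∈ span F (v '' {i | (i : ℕ) ≤ k}) ↔ (i : ℕ) ≤ k :=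
    fun _ _ => hv.apply_mem_span_image_iff
  refine ⟨fun k k' hk => lt_of_le_of_ne ?_ fun h => ?_, fun k => ⟨fun h => ?_, fun h => ?_⟩⟩
  · exact span_mono (Set.image_mono fun i (hi : (i : ℕ) ≤ k) => hi.trans hk.le)
  · simp only at h
    have := (hmem ⟨k', by omega⟩ k).mp (h ▸ (hmem ⟨k', by omega⟩ k').mpr le_rfl)
    exact hk.not_ge this
  · exact hv.ne_zero ⟨k, by omega⟩ ((mem_bot F).mp (h ▸ (hmem _ k).mpr le_rfl))
  · have := (hmem (Fin.last _) k).mp (h ▸ mem_top)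
    simp only [Fin.val_last] at this
    omega

def frameFlag (v : Fin (m + 2) → Fin (m + 2) → F) (hv : LinearIndependent F v) :
    TFlag F (m + 2) (m + 1) :=
  ⟨fun k => span F (v '' {i | (i : ℕ) ≤ k}), frame_isFlag hv⟩

theorem tface_frameFlag_comp_swap (hv : LinearIndependent F v) (i : Fin (m + 1)) :
    tface F (frameFlag (v ∘ Equiv.swap i.castSucc i.succ) (hv.comp _ (Equiv.injective _))) i =
      tface F (frameFlag v hv) i := by
  refine Subtype.ext (funext fun t => ?_)
  change span F ((v ∘ _) '' _) = span F (v '' _)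
  rw [Set.image_comp]
  congr 2
  have hne : ((i.succAbove t : Fin (m + 1)) : ℕ) ≠ i := Fin.val_ne_of_ne (Fin.succAbove_ne i t)
  ext s
  simp only [Set.mem_image_equiv, Set.mem_ofPred_eq, Equiv.symm_swap, Equiv.swap_apply_def]
  split_ifs <;> subst_vars <;> simp only [Fin.val_succ, Fin.val_castSucc] <;> omega

variable (R : Type*) [CommRing R]

theorem apartment_eq_sum {B : Matrix (Fin (m + 2)) (Fin (m + 2)) F}
    (hB : LinearIndependent F B.col) :
    apartment F R (m + 2) B = ∑ π : Equiv.Perm (Fin (m + 2)),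
      (Equiv.Perm.sign π : ℤ) • tchainOf F R (frameFlag (B.col ∘ π) (hB.comp π π.injective)).1 :=
  rfl

/-- Swapping two consecutive vectors of the frame pairs off the terms of the boundary. -/
theorem tbdry_apartment {B : Matrix (Fin (m + 2)) (Fin (m + 2)) F}
    (hB : LinearIndependent F B.col) : tbdry F R (m + 2) m (apartment F R (m + 2) B) = 0 := by
  rw [apartment_eq_sum R hB, map_sum]
  simp_rw [map_zsmul, tbdry_tchainOf, Finset.smul_sum]
  rw [Finset.sum_comm]
  refine Finset.sum_eq_zero fun i _ => Finset.sum_ninvolution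
    (fun π => π * Equiv.swap i.castSucc i.succ) (fun π => ?_) (fun π _ h => ?_)
    (fun _ => Finset.mem_univ _) (fun π => by simp [mul_assoc])
  · have hface : tface F (frameFlag (B.col ∘ ⇑(π * Equiv.swap i.castSucc i.succ)) _) i =
        tface F (frameFlag (B.col ∘ π) _) i :=
      tface_frameFlag_comp_swap (hB.comp π π.injective) i
    have hsign : Equiv.Perm.sign (π * Equiv.swap i.castSucc i.succ) = - Equiv.Perm.sign π := by
      rw [Equiv.Perm.sign_mul, Equiv.Perm.sign_swap Fin.castSucc_lt_succ.ne, mul_neg_one]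
    rw [hsign, Units.val_neg, neg_smul, hface, add_neg_cancel]
  · exact Fin.castSucc_lt_succ.ne (Equiv.swap_eq_one_iff.mp (mul_eq_left.mp h))

end Frames

section BigCell

variable (F) in
abbrev UnitriangularMatrix (d : ℕ) :=
  {B : Matrix (Fin d) (Fin d) F // (∀ i, B i i = 1) ∧ ∀ i j : Fin d, (j : ℕ) < (i : ℕ) → B i j = 0}

namespace UnitriangularMatrix

variable {d : ℕ} (B : UnitriangularMatrix F d)

theorem linearIndependent_col : LinearIndependent F B.1.col := by
  rw [Matrix.linearIndependent_cols_iff_isUnit, Matrix.isUnit_iff_isUnit_det,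
    Matrix.det_of_isUpperTriangular fun i j h => B.2.2 i j h]
  simp [B.2.1]

theorem col_mem_coordSubspace (j : Fin d) : B.1.col j ∈ coordSubspace F d (j + 1) :=
  mem_coordSubspace.mpr fun i hi => B.2.2 i j (by omega)

theorem col_sub_col_mem_coordSubspace (B' : UnitriangularMatrix F d) (j : Fin d) :
    B.1.col j - B'.1.col j ∈ coordSubspace F d j := by
  refine mem_coordSubspace.mpr fun i hi => ?_
  rcases hi.eq_or_lt with hij | hij
  · obtain rfl : j = i := Fin.ext hij
    simp [B.2.1, B'.2.1]
  · simp [B.2.2 i j hij, B'.2.2 i j hij]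

theorem coordSubspace_eq_span_col {s : ℕ} (hs : s ≤ d) :
    coordSubspace F d s = span F (B.1.col '' {j | (j : ℕ) < s}) := by
  refine (eq_of_le_of_finrank_le (span_le.mpr ?_) ?_).symm
  · rintro _ ⟨j, hj, rfl⟩
    exact coordSubspace_mono hj (B.col_mem_coordSubspace j)
  · have hli : LinearIndependent F fun j : {j : Fin d | (j : ℕ) < s} => B.1.col j :=
      B.linearIndependent_col.comp _ Subtype.val_injective
    rw [finrank_coordSubspace hs, Set.image_eq_range, finrank_span_eq_card hli]
    exact (Fintype.card_fin_lt_of_le hs).ge.trans (Fintype.card_congr' rfl).le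

theorem disjoint_span_col {S : Set (Fin d)} {s : ℕ} (hs : s ≤ d) (hS : ∀ j ∈ S, s ≤ (j : ℕ)) :
    Disjoint (span F (B.1.col '' S)) (coordSubspace F d s) := by
  rw [B.coordSubspace_eq_span_col hs]
  exact B.linearIndependent_col.disjoint_span_image
    (Set.disjoint_left.mpr fun j hj (hj' : (j : ℕ) < s) => (hS j hj).not_gt hj')

end UnitriangularMatrix

theorem eq_revPerm_of_rev_le {n : ℕ} {σ : Equiv.Perm (Fin n)} (h : ∀ i, Fin.rev i ≤ σ i) :
    σ = Fin.revPerm := by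
  have hsum : ∑ i, ((Fin.rev i : Fin n) : ℕ) = ∑ i, (σ i : ℕ) :=
    (Equiv.sum_comp Fin.revPerm (fun i => (i : ℕ))).trans (Equiv.sum_comp σ (fun i => (i : ℕ))).symm
  have := (Finset.sum_eq_sum_iff_of_le fun i _ => Fin.le_def.mp (h i)).mp hsum
  exact Equiv.ext fun i => (Fin.ext (this i (Finset.mem_univ _))).symm

theorem exists_mem_of_codisjoint_coordSubspace {d : ℕ} {U : Submodule F (Fin d → F)} {s : Fin d}
    (h : Codisjoint U (coordSubspace F d s)) : ∃ u ∈ U, u s = 1 ∧ ∀ i, s < i → u i = 0 := by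
  obtain ⟨u, hu, w, hw, huw⟩ :=
    mem_sup.mp (codisjoint_iff.mp h ▸ mem_top : Pi.single s 1 ∈ U ⊔ coordSubspace F d s)
  refine ⟨u, hu, ?_, fun i hi => ?_⟩
  · simpa [mem_coordSubspace.mp hw s le_rfl] using congrFun huw s
  · simpa [mem_coordSubspace.mp hw i hi.le, Pi.single_apply, hi.ne'] using congrFun huw i

variable {m : ℕ}

def revFrameFlag (B : UnitriangularMatrix F (m + 2)) : TFlag F (m + 2) (m + 1) :=
  frameFlag (B.1.col ∘ Fin.revPerm) (B.linearIndependent_col.comp _ Fin.revPerm.injective)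

theorem isGeneric_frameFlag_iff (B : UnitriangularMatrix F (m + 2)) (π : Equiv.Perm (Fin (m + 2))) :
    IsGeneric (frameFlag (B.1.col ∘ π) (B.linearIndependent_col.comp π π.injective)) ↔
      π = Fin.revPerm := by
  constructor
  · intro hgen
    refine eq_revPerm_of_rev_le fun i => Fin.lastCases (by simp) (fun t => ?_) i
    rw [Fin.le_def, Fin.val_rev, Fin.val_castSucc]
    by_contra! hlt
    have hmem : B.1.col (π t.castSucc) ∈
        (frameFlag (B.1.col ∘ π) (B.linearIndependent_col.comp π π.injective)).1 t :=
      subset_span ⟨t.castSucc, Nat.le_refl (t : ℕ), rfl⟩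
    have hE : B.1.col (π t.castSucc) ∈ coordSubspace F (m + 2) (m + 1 - t) :=
      coordSubspace_mono (by omega) (B.col_mem_coordSubspace _)
    exact B.linearIndependent_col.ne_zero _ (disjoint_def.mp (hgen t) _ hmem hE)
  · rintro rfl t
    change Disjoint (span F ((B.1.col ∘ Fin.revPerm) '' _)) _
    rw [Set.image_comp]
    refine B.disjoint_span_col (by omega) ?_
    rintro _ ⟨i, hi : (i : ℕ) ≤ t, rfl⟩
    simp only [Fin.revPerm_apply, Fin.val_rev]
    omega

theorem isGeneric_revFrameFlag (B : UnitriangularMatrix F (m + 2)) :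
    IsGeneric (revFrameFlag B) :=
  (isGeneric_frameFlag_iff B _).mpr rfl

theorem col_mem_revFrameFlag (B : UnitriangularMatrix F (m + 2)) {j : Fin (m + 2)}
    {t : Fin (m + 1)} (h : m + 1 ≤ t + j) : B.1.col j ∈ (revFrameFlag B).1 t :=
  subset_span ⟨Fin.rev j, by simp only [Set.mem_ofPred_eq, Fin.val_rev]; omega, by simp⟩

theorem revFrameFlag_injective : Function.Injective (revFrameFlag (F := F) (m := m)) := by
  intro B B' h
  have hcol : ∀ j, B.1.col j = B'.1.col j := fun j => sub_eq_zero.mp <| by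
    have hE := B.col_sub_col_mem_coordSubspace B' j
    rcases Nat.eq_zero_or_pos j with hj | hj
    · rwa [hj, coordSubspace_zero, mem_bot] at hE
    · obtain ⟨t, ht⟩ : ∃ t : Fin (m + 1), (t : ℕ) = m + 1 - j := ⟨⟨m + 1 - j, by omega⟩, rfl⟩
      have hC : B.1.col j - B'.1.col j ∈ (revFrameFlag B).1 t :=
        sub_mem (col_mem_revFrameFlag B (by omega)) (h ▸ col_mem_revFrameFlag B' (by omega))
      refine disjoint_def.mp (isGeneric_revFrameFlag B t) _ hC ?_
      rwa [show m + 1 - (t : ℕ) = j by omega]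
  exact Subtype.ext (Matrix.ext fun i j => congrFun (hcol j) i)

theorem exists_revFrameFlag_eq {C : TFlag F (m + 2) (m + 1)} (hC : IsGeneric C) :
    ∃ B : UnitriangularMatrix F (m + 2), revFrameFlag B = C := by
  have hcol : ∀ j : Fin (m + 2), ∃ u : Fin (m + 2) → F, (u j = 1 ∧ ∀ i, j < i → u i = 0) ∧
      ∀ t : Fin (m + 1), m + 1 ≤ t + j → u ∈ C.1 t := by
    intro j
    rcases Nat.eq_zero_or_pos j with hj | hj
    · obtain ⟨u, -, hu⟩ :=
        exists_mem_of_codisjoint_coordSubspace (U := (⊤ : Submodule F _)) (s := j)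
          codisjoint_top_left
      exact ⟨u, hu, fun t ht => by omega⟩
    · obtain ⟨t₀, ht₀⟩ : ∃ t₀ : Fin (m + 1), (t₀ : ℕ) = m + 1 - j := ⟨⟨m + 1 - j, by omega⟩, rfl⟩
      have hcod := (hC.isCompl t₀).codisjoint
      rw [show m + 1 - (t₀ : ℕ) = j by omega] at hcod
      obtain ⟨u, hu, hnorm⟩ := exists_mem_of_codisjoint_coordSubspace hcod
      exact ⟨u, hnorm, fun t ht => C.2.1.monotone (Fin.le_def.mpr (by omega)) hu⟩
  choose u hu hmem using hcol
  refine ⟨⟨Matrix.of fun i j => u j i, fun i => (hu i).1, fun i j hij => (hu j).2 i hij⟩,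
    flag_eq_of_le fun t => span_le.mpr ?_⟩
  rintro _ ⟨i, hi : (i : ℕ) ≤ t, rfl⟩
  exact hmem _ t (by simp only [Fin.revPerm_apply, Fin.val_rev]; omega)

end BigCell

section Basis

variable (R : Type*) [CommRing R] {m : ℕ}

variable (m) in
def revSign : ℤ := Equiv.Perm.sign (Fin.revPerm : Equiv.Perm (Fin (m + 2)))

theorem revSign_mul_self : (revSign m : R) * revSign m = 1 := by
  rw [← Int.cast_mul, revSign, ← Units.val_mul, Int.units_mul_self, Units.val_one, Int.cast_one]

variable {R}

/-- The only generic chamber of the apartment of `B` is `revFrameFlag B`. -/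
theorem chainCoeff_revFrameFlag_apartment (B B' : UnitriangularMatrix F (m + 2)) :
    chainCoeff R (revFrameFlag B') (apartment F R (m + 2) B.1) =
      if B = B' then (revSign m : R) else 0 := by
  rw [apartment_eq_sum R B.linearIndependent_col, map_sum]
  simp_rw [map_zsmul, chainCoeff_tchainOf]
  rw [Finset.sum_eq_single Fin.revPerm (fun π _ hπ => ?_) (fun h => absurd (Finset.mem_univ _) h)]
  · change (revSign m) • (if revFrameFlag B = revFrameFlag B' then (1 : R) else 0) = _
    simp [revFrameFlag_injective.eq_iff]
  · rw [if_neg, smul_zero]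
    exact fun h => hπ ((isGeneric_frameFlag_iff B π).mp (h ▸ isGeneric_revFrameFlag B'))

theorem chainCoeff_revFrameFlag_linearCombination (c : UnitriangularMatrix F (m + 2) →₀ R)
    (B' : UnitriangularMatrix F (m + 2)) :
    chainCoeff R (revFrameFlag B')
        (Finsupp.linearCombination R
          (fun B : UnitriangularMatrix F (m + 2) => apartment F R (m + 2) B.1) c) =
      c B' * revSign m := by
  rw [Finsupp.linearCombination_apply, Finsupp.sum, map_sum]
  simp_rw [map_smul, chainCoeff_revFrameFlag_apartment, smul_eq_mul, mul_ite, mul_zero]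
  rw [Finset.sum_ite_eq']
  split_ifs with h
  · rfl
  · rw [Finsupp.notMem_support_iff.mp h, zero_mul]

variable (F R m)

theorem linearIndependent_apartment :
    LinearIndependent R fun B : UnitriangularMatrix F (m + 2) => apartment F R (m + 2) B.1 := by
  refine linearIndependent_iff.mpr fun c hc => Finsupp.ext fun B => ?_
  have h := chainCoeff_revFrameFlag_linearCombination c B
  rw [hc, map_zero] at h
  calc c B = c B * revSign m * revSign m := by rw [mul_assoc, revSign_mul_self, mul_one]
    _ = 0 := by rw [← h, zero_mul]

theorem span_apartment_eq_ker :
    span R (Set.range fun B : UnitriangularMatrix F (m + 2) => apartment F R (m + 2) B.1) =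
      LinearMap.ker (tbdry F R (m + 2) m) := by
  have hle : span R (Set.range fun B : UnitriangularMatrix F (m + 2) => apartment F R (m + 2) B.1) ≤
      LinearMap.ker (tbdry F R (m + 2) m) :=
    span_le.mpr fun _ ⟨B, hB⟩ => hB ▸ tbdry_apartment R B.linearIndependent_col
  refine le_antisymm hle fun z hz => ?_
  rw [← Finsupp.range_linearCombination] at hle ⊢
  let c : UnitriangularMatrix F (m + 2) →₀ R :=
    (revSign m : R) • Finsupp.comapDomain revFrameFlag z revFrameFlag_injective.injOn
  refine ⟨c, (sub_eq_zero.mp (eq_zero_of_tbdry_eq_zero ?_ fun C hC => ?_)).symm⟩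
  · rw [map_sub, LinearMap.mem_ker.mp hz, LinearMap.mem_ker.mp (hle ⟨c, rfl⟩), sub_zero]
  · obtain ⟨B, rfl⟩ := exists_revFrameFlag_eq hC
    rw [map_sub, chainCoeff_revFrameFlag_linearCombination, sub_eq_zero]
    change _ = (revSign m : R) * chainCoeff R (revFrameFlag B) z * revSign m
    rw [mul_comm, ← mul_assoc, revSign_mul_self, one_mul]

end Basis

end SolomonTits

theorem solomonTits_unitriangular_basis (F : Type*) [Field F] (R : Type*) [CommRing R]
    (m₀ : ℕ) :
    ∃ b : Module.Basis {B : Matrix (Fin (m₀ + 2)) (Fin (m₀ + 2)) F //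
        (∀ i, B i i = 1) ∧ ∀ i j : Fin (m₀ + 2), (j : ℕ) < (i : ℕ) → B i j = 0}
        R (LinearMap.ker (tbdry F R (m₀ + 2) m₀)),
      ∀ B, (b B : TCh F R (m₀ + 2) (m₀ + 1)) = apartment F R (m₀ + 2) B.1 := by
  refine ⟨(Module.Basis.span (SolomonTits.linearIndependent_apartment F R m₀)).map
    (LinearEquiv.ofEq _ _ (SolomonTits.span_apartment_eq_ker F R m₀)), fun B => ?_⟩
  rw [Module.Basis.map_apply, LinearEquiv.coe_ofEq_apply, Module.Basis.span_apply]
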